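/- Let f₁, …, f_s : ℤ_m → ℤ_m be 1-Lipschitz. Suppose that for all K, d ∈ ℕ, β ∈ {0,…,m^d−1} and every set M ⊆ {0,…,m^K−1}^s, liminf_{n→∞} μ(φₙ ∈ ⋃_{b∈M} ⋃_{c∈O_K(b)} J_K(c) | ξ_d = β) ≥ Σ_{b∈M} m^{−Ks}, where O_K(b) = {c ∈ {0,…,m^K−1}^s : (bᵢ − cᵢ) mod m^K ∈ {0, 1, m^K−1} for all i}. Then the collection f₁, …, f_s is uniform with each suffix. -/

import Mathlib

open MeasureTheory ProbabilityTheory Filter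

/-- The ring `ℤ_m` of `m`-adic integers, modelled as base-`m` digit sequences. -/
abbrev Zm (m : ℕ) := ℕ → Fin m

/-- `ω mod m^n`: the natural number formed by the first `n` base-`m` digits of `ω`. -/
def modPow {m : ℕ} (ω : Zm m) (n : ℕ) : ℕ :=
  ∑ i ∈ Finset.range n, (ω i).val * m ^ i

/-- `f : ℤ_m → ℤ_m` is 1-Lipschitz: the first `n` digits of `f ω` depend only
on the first `n` digits of `ω`. -/
def Lip1 {m : ℕ} (f : Zm m → Zm m) : Prop :=
  ∀ (n : ℕ) (ω₁ ω₂ : Zm m), modPow ω₁ n = modPow ω₂ n → modPow (f ω₁) n = modPow (f ω₂) n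

/-- `μ` is the normalized Haar measure on `ℤ_m`: every ball
`{ω : ω mod m^k = a}` has measure `m^{-k}`. -/
def IsHaar {m : ℕ} (μ : Measure (Zm m)) : Prop :=
  ∀ (k a : ℕ), a < m ^ k → μ {ω | modPow ω k = a} = ((m : ENNReal) ^ k)⁻¹

/-- The vector `φₙ(ω) = ((f₁(ω) mod m^n)/m^n, …, (f_s(ω) mod m^n)/m^n)`. -/
noncomputable def phi {m s : ℕ} (f : Fin s → Zm m → Zm m) (n : ℕ) (ω : Zm m) :
    Fin s → ℝ :=
  fun i => (modPow (f i ω) n : ℝ) / (m : ℝ) ^ n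

/-- The cube `J_k(a) = ∏ᵢ [aᵢ/m^k, (aᵢ+1)/m^k) ⊂ [0,1)^s`. -/
def Jcube (m k : ℕ) {s : ℕ} (a : Fin s → ℕ) : Set (Fin s → ℝ) :=
  {x | ∀ i, (a i : ℝ) / (m : ℝ) ^ k ≤ x i ∧ x i < ((a i : ℝ) + 1) / (m : ℝ) ^ k}

/-- The suffix event `ξ_d = β`, i.e. `ω mod m^d = β`. -/
def suffixEvent (m d β : ℕ) : Set (Zm m) := {ω | modPow ω d = β}

/-- The uniform (Lebesgue) probability distribution on the cube `[0,1)^s`. -/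
noncomputable def unifCube (s : ℕ) : Measure (Fin s → ℝ) :=
  volume.restrict (Set.univ.pi fun _ => Set.Ico (0 : ℝ) 1)

/-- The collection `f₁,…,f_s` generates a uniform distribution: `φₙ` converges
weakly to the uniform distribution on `[0,1)^s`. -/
def GeneratesUniform {m s : ℕ} (μ : Measure (Zm m)) (f : Fin s → Zm m → Zm m) : Prop :=
  ∀ g : BoundedContinuousFunction (Fin s → ℝ) ℝ,
    Tendsto (fun n => ∫ ω, g (phi f n ω) ∂μ) atTop (nhds (∫ x, g x ∂(unifCube s)))

/-- The collection `f₁,…,f_s` is uniform with each suffix: conditionally on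
`ξ_d = β`, the probability that `φₙ` hits any cube `J_k(a)` tends to `m^{-ks}`. -/
def UniformWithSuffix {m s : ℕ} (μ : Measure (Zm m)) (f : Fin s → Zm m → Zm m) : Prop :=
  ∀ (k d : ℕ) (a : Fin s → ℕ), (∀ i, a i < m ^ k) → ∀ β < m ^ d,
    Tendsto
      (fun n => ProbabilityTheory.cond μ (suffixEvent m d β) {ω | phi f n ω ∈ Jcube m k a})
      atTop (nhds (((m : ENNReal) ^ (k * s))⁻¹))

/-- The cyclic `±1` neighborhood `O_K(b)`: collections `c ∈ {0,…,m^K−1}^s`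
with `(bᵢ − cᵢ) mod m^K ∈ {0, 1, m^K − 1}` for all `i`. -/
def neighb (m K : ℕ) {s : ℕ} (b c : Fin s → ℕ) : Prop :=
  (∀ i, c i < m ^ K) ∧
  ∀ i, ((b i : ℤ) - (c i : ℤ)) % (m : ℤ) ^ K ∈ ({0, 1, (m : ℤ) ^ K - 1} : Set ℤ)

/-!
Fix a cube `J_k(a)`. For `r ≥ 1`, the level-`(k + r)` cubes `J_{k+r}(b)` refining `J_k(a)` with
every coordinate of `b` at distance at least two from the boundary of the block are
`(m^r - 2)^s` in number, and their neighbourhoods `O_{k+r}(b)` only contain cubes inside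
`J_k(a)`. The hypothesis therefore bounds the liminf of the probability of `J_k(a)` (and of
any finite union of level-`k` cubes) from below by `(m^r - 2)^s m^{-(k+r)s} → m^{-ks}`.
Applied to the union of the other `m^{ks} - 1` cubes, which tile the complement of `J_k(a)`
in `[0,1)^s`, the same bound gives the matching upper bound for the limsup.
-/

open Set
open scoped ENNReal Topology

section Digits

variable {m s : ℕ}

lemma modPow_succ (ω : Zm m) (n : ℕ) :
    modPow ω (n + 1) = modPow ω n + (ω n).val * m ^ n :=
  Finset.sum_range_succ _ _

lemma modPow_lt (ω : Zm m) (n : ℕ) : modPow ω n < m ^ n := by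
  induction n with
  | zero => simp [modPow]
  | succ n ih =>
    calc modPow ω (n + 1) < m ^ n + (ω n).val * m ^ n := by rw [modPow_succ]; omega
      _ = ((ω n).val + 1) * m ^ n := by ring
      _ ≤ m ^ (n + 1) := by rw [pow_succ']; exact Nat.mul_le_mul_right _ (ω n).isLt

lemma measurable_modPow (n : ℕ) : Measurable fun ω : Zm m => modPow ω n :=
  Finset.measurable_sum _ fun i _ =>
    (measurable_of_countable fun v : Fin m => v.val * m ^ i).comp (measurable_pi_apply i)

lemma Lip1.exists_modPow_eq_comp {f : Zm m → Zm m} (hf : Lip1 f) (n : ℕ) :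
    ∃ g : ℕ → ℕ, ∀ ω, modPow (f ω) n = g (modPow ω n) := by
  classical
  refine ⟨fun t => if h : ∃ ω, modPow ω n = t then modPow (f h.choose) n else 0, fun ω => ?_⟩
  have h : ∃ ω', modPow ω' n = modPow ω n := ⟨ω, rfl⟩
  dsimp only
  rw [dif_pos h]
  exact hf n _ _ h.choose_spec.symm

lemma measurable_phi {f : Fin s → Zm m → Zm m} (hf : ∀ i, Lip1 (f i)) (n : ℕ) :
    Measurable (phi f n) := by
  refine measurable_pi_lambda _ fun i => ?_
  obtain ⟨g, hg⟩ := (hf i).exists_modPow_eq_comp n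
  simp only [phi, hg]
  exact ((measurable_from_nat (f := fun t => (g t : ℝ))).comp (measurable_modPow n)).div_const _

lemma phi_mem_Ico (hm : 0 < m) (f : Fin s → Zm m → Zm m) (n : ℕ) (ω : Zm m) (i : Fin s) :
    phi f n ω i ∈ Ico 0 1 := by
  refine ⟨by unfold phi; positivity, ?_⟩
  rw [phi, div_lt_one (by positivity)]
  exact_mod_cast modPow_lt (f i ω) n

end Digits

section Cubes

variable {m k s : ℕ}

lemma Jcube_eq_pi (m k : ℕ) (a : Fin s → ℕ) :
    Jcube m k a =
      univ.pi fun i => Ico ((a i : ℝ) / (m : ℝ) ^ k) (((a i : ℝ) + 1) / (m : ℝ) ^ k) := by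
  ext x; simp [Jcube, Set.mem_pi]

lemma measurableSet_Jcube (m k : ℕ) (a : Fin s → ℕ) : MeasurableSet (Jcube m k a) := by
  rw [Jcube_eq_pi]
  exact MeasurableSet.univ_pi fun _ => measurableSet_Ico

lemma Jcube_subset_Jcube (hm : 0 < m) {r : ℕ} {a c : Fin s → ℕ}
    (hlow : ∀ i, a i * m ^ r ≤ c i) (hhigh : ∀ i, c i + 1 ≤ (a i + 1) * m ^ r) :
    Jcube m (k + r) c ⊆ Jcube m k a := by
  intro x hx i
  obtain ⟨hl, hr⟩ := hx i
  have hmr : (0 : ℝ) < (m : ℝ) ^ r := by positivity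
  have rescale : ∀ y : ℝ, y / (m : ℝ) ^ k = y * (m : ℝ) ^ r / (m : ℝ) ^ (k + r) := fun y => by
    rw [pow_add, mul_div_mul_right _ _ hmr.ne']
  rw [rescale, rescale]
  constructor
  · exact le_trans (div_le_div_of_nonneg_right (by exact_mod_cast hlow i) (by positivity)) hl
  · exact hr.trans_le (div_le_div_of_nonneg_right (by exact_mod_cast hhigh i) (by positivity))

lemma floor_eq_of_mem_Jcube (hm : 0 < m) {a : Fin s → ℕ} {x : Fin s → ℝ}
    (hx : x ∈ Jcube m k a) (i : Fin s) : ⌊x i * (m : ℝ) ^ k⌋₊ = a i := by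
  obtain ⟨hl, hr⟩ := hx i
  have hmk : (0 : ℝ) < (m : ℝ) ^ k := by positivity
  rw [div_le_iff₀ hmk] at hl
  rw [lt_div_iff₀ hmk] at hr
  exact (Nat.floor_eq_iff ((Nat.cast_nonneg _).trans hl)).mpr ⟨hl, hr⟩

lemma eq_of_mem_Jcube (hm : 0 < m) {a b : Fin s → ℕ} {x : Fin s → ℝ}
    (ha : x ∈ Jcube m k a) (hb : x ∈ Jcube m k b) : a = b :=
  funext fun i => (floor_eq_of_mem_Jcube hm ha i).symm.trans (floor_eq_of_mem_Jcube hm hb i)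

def cubeIndices (m k s : ℕ) : Finset (Fin s → ℕ) :=
  Fintype.piFinset fun _ => Finset.range (m ^ k)

lemma mem_cubeIndices {a : Fin s → ℕ} : a ∈ cubeIndices m k s ↔ ∀ i, a i < m ^ k := by
  simp [cubeIndices]

lemma card_cubeIndices : (cubeIndices m k s).card = m ^ (k * s) := by
  simp [cubeIndices, pow_mul]

lemma exists_mem_Jcube (hm : 0 < m) {x : Fin s → ℝ} (hx : ∀ i, x i ∈ Ico 0 1) :
    ∃ a ∈ cubeIndices m k s, x ∈ Jcube m k a := by
  have hmk : (0 : ℝ) < (m : ℝ) ^ k := by positivity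
  have hnn : ∀ i, 0 ≤ x i * (m : ℝ) ^ k := fun i => mul_nonneg (hx i).1 hmk.le
  refine ⟨fun i => ⌊x i * (m : ℝ) ^ k⌋₊, mem_cubeIndices.mpr fun i => ?_, fun i => ⟨?_, ?_⟩⟩
  · rw [Nat.floor_lt (hnn i)]
    push_cast
    exact mul_lt_of_lt_one_left hmk (hx i).2
  · rw [div_le_iff₀ hmk]
    exact Nat.floor_le (hnn i)
  · rw [lt_div_iff₀ hmk]
    exact Nat.lt_floor_add_one _

lemma not_mem_Jcube_iff (hm : 0 < m) {a₀ : Fin s → ℕ} {x : Fin s → ℝ} (hx : ∀ i, x i ∈ Ico 0 1) :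
    x ∉ Jcube m k a₀ ↔ x ∈ ⋃ a ∈ (cubeIndices m k s).erase a₀, Jcube m k a := by
  simp only [mem_iUnion, Finset.mem_erase, exists_prop]
  constructor
  · intro hx₀
    obtain ⟨a, ha, hxa⟩ := exists_mem_Jcube (k := k) hm hx
    exact ⟨a, ⟨fun h => hx₀ (h ▸ hxa), ha⟩, hxa⟩
  · rintro ⟨a, ⟨hne, -⟩, hxa⟩ hx₀
    exact hne (eq_of_mem_Jcube hm hxa hx₀)

end Cubes

section InnerRefinements

variable {m k r s : ℕ}

-- Away from the ends of `[0, N)`, the cyclic neighbourhood is an honest `±1` neighbourhood.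
lemma le_add_one_of_emod_sub_mem {N b c : ℕ} (hb : 1 ≤ b) (hbN : b + 2 ≤ N) (hc : c < N)
    (h : ((b : ℤ) - c) % N ∈ ({0, 1, (N : ℤ) - 1} : Set ℤ)) :
    b ≤ c + 1 ∧ c ≤ b + 1 := by
  simp only [mem_insert_iff, mem_singleton_iff] at h
  rcases le_or_gt c b with hcb | hbc
  · rw [Int.emod_eq_of_lt (by omega) (by omega)] at h
    omega
  · rw [← Int.add_mul_emod_self_left _ (N : ℤ) 1, Int.emod_eq_of_lt (by omega) (by omega)] at h
    omega

/-- The refinements `b` of `a` at level `k + r` whose whole neighbourhood `O_{k+r}(b)`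
stays inside `J_k(a)`. -/
def innerRefinements (m r : ℕ) (a : Fin s → ℕ) : Finset (Fin s → ℕ) :=
  Fintype.piFinset fun i => Finset.Icc (a i * m ^ r + 1) (a i * m ^ r + m ^ r - 2)

lemma mem_innerRefinements {a b : Fin s → ℕ} :
    b ∈ innerRefinements m r a ↔ ∀ i, a i * m ^ r + 1 ≤ b i ∧ b i ≤ a i * m ^ r + m ^ r - 2 := by
  simp [innerRefinements]

lemma card_innerRefinements (a : Fin s → ℕ) :
    (innerRefinements m r a).card = (m ^ r - 2) ^ s := by
  simp only [innerRefinements, Fintype.card_piFinset, Nat.card_Icc,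
    show ∀ x y : ℕ, x + y - 2 + 1 - (x + 1) = y - 2 by omega, Finset.prod_const,
    Finset.card_univ, Fintype.card_fin]

lemma disjoint_innerRefinements {a a' : Fin s → ℕ} (hne : a ≠ a') :
    Disjoint (innerRefinements m r a) (innerRefinements m r a') := by
  refine Finset.disjoint_left.mpr fun b hb hb' => hne (funext fun i => ?_)
  have h := mem_innerRefinements.mp hb i
  have h' := mem_innerRefinements.mp hb' i
  rcases lt_trichotomy (a i) (a' i) with hlt | heq | hgt
  · have := Nat.mul_le_mul_right (m ^ r) hlt
    rw [Nat.succ_mul] at this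
    omega
  · exact heq
  · have := Nat.mul_le_mul_right (m ^ r) hgt
    rw [Nat.succ_mul] at this
    omega

lemma mul_pow_add_pow_le_pow_add {a : ℕ} (ha : a < m ^ k) : a * m ^ r + m ^ r ≤ m ^ (k + r) := by
  have := Nat.mul_le_mul_right (m ^ r) ha
  rwa [Nat.succ_mul, ← pow_add] at this

lemma innerRefinements_subset_cubeIndices {a : Fin s → ℕ} (ha : a ∈ cubeIndices m k s) :
    innerRefinements m r a ⊆ cubeIndices m (k + r) s := fun b hb =>
  mem_cubeIndices.mpr fun i => by
    have := mem_innerRefinements.mp hb i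
    have := mul_pow_add_pow_le_pow_add (r := r) (mem_cubeIndices.mp ha i)
    omega

lemma Jcube_subset_of_neighb (hm : 0 < m) {a b c : Fin s → ℕ}
    (ha : ∀ i, a i < m ^ k) (hb : b ∈ innerRefinements m r a) (hc : neighb m (k + r) b c) :
    Jcube m (k + r) c ⊆ Jcube m k a := by
  have hbc : ∀ i, b i ≤ c i + 1 ∧ c i ≤ b i + 1 := fun i => by
    have hbi := mem_innerRefinements.mp hb i
    have := mul_pow_add_pow_le_pow_add (r := r) (ha i)
    exact le_add_one_of_emod_sub_mem (by omega) (by omega) (hc.1 i) (by exact_mod_cast hc.2 i)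
  refine Jcube_subset_Jcube hm (fun i => ?_) (fun i => ?_)
  · have := mem_innerRefinements.mp hb i; have := hbc i; omega
  · have := mem_innerRefinements.mp hb i; have := hbc i; rw [add_one_mul]; omega

end InnerRefinements

section Limits

variable {m : ℕ}

lemma tendsto_natSub_two_div_pow (hm : 1 < m) :
    Tendsto (fun r : ℕ => ((m ^ r - 2 : ℕ) : ℝ≥0∞) / (m : ℝ≥0∞) ^ r) atTop (𝓝 1) := by
  have hpow : Tendsto (fun r : ℕ => (m : ℝ≥0∞) ^ r) atTop (𝓝 ∞) :=
    ENNReal.tendsto_pow_atTop_nhds_top_iff.mpr (by exact_mod_cast hm)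
  have htwo : Tendsto (fun r : ℕ => 2 / (m : ℝ≥0∞) ^ r) atTop (𝓝 0) := by
    simpa using ENNReal.Tendsto.const_div hpow (Or.inr ENNReal.ofNat_ne_top)
  have hlim : Tendsto (fun r : ℕ => 1 - 2 / (m : ℝ≥0∞) ^ r) atTop (𝓝 1) := by
    simpa using ENNReal.Tendsto.sub tendsto_const_nhds htwo (Or.inl ENNReal.one_ne_top)
  refine hlim.congr' ?_
  filter_upwards [eventually_ge_atTop 1] with r hr
  have hmr : 2 ≤ m ^ r := hm.trans_le (Nat.le_self_pow (by omega) m)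
  have hne : (m : ℝ≥0∞) ^ r ≠ 0 := pow_ne_zero _ (by exact_mod_cast (by omega : m ≠ 0))
  rw [ENNReal.natCast_sub, ENNReal.sub_div (fun _ _ => hne), Nat.cast_pow, Nat.cast_ofNat,
    ENNReal.div_self hne (ENNReal.pow_ne_top (ENNReal.natCast_ne_top m))]

lemma tendsto_card_mul_inv_pow (hm : 1 < m) (k s C : ℕ) :
    Tendsto (fun r : ℕ => ((C * (m ^ r - 2) ^ s : ℕ) : ℝ≥0∞) * ((m : ℝ≥0∞) ^ ((k + r) * s))⁻¹)
      atTop (𝓝 (C * ((m : ℝ≥0∞) ^ (k * s))⁻¹)) := by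
  have hm₀ : (m : ℝ≥0∞) ≠ 0 := by exact_mod_cast (by omega : m ≠ 0)
  have hlim := ENNReal.Tendsto.const_mul (a := C * ((m : ℝ≥0∞) ^ (k * s))⁻¹)
    (ENNReal.Tendsto.pow (tendsto_natSub_two_div_pow hm) (n := s)) (Or.inr (ENNReal.mul_ne_top (by simp) (by simp [hm₀])))
  rw [one_pow, mul_one] at hlim
  refine hlim.congr fun r => ?_
  rw [div_eq_mul_inv, mul_pow, add_mul, pow_add, ENNReal.mul_inv
    (Or.inl (pow_ne_zero _ hm₀)) (Or.inl (ENNReal.pow_ne_top (ENNReal.natCast_ne_top m)))]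
  simp only [ENNReal.inv_pow, ← pow_mul]
  push_cast
  ring

end Limits

section CubeProbabilities

variable {Ω : Type*} [MeasurableSpace Ω] {m s k : ℕ} (ν : Measure Ω) (X : ℕ → Ω → Fin s → ℝ)

lemma le_liminf_measure_biUnion_Jcube (hm : 1 < m)
    (hneighb : ∀ K, ∀ M : Set (Fin s → ℕ), (∀ b ∈ M, ∀ i, b i < m ^ K) →
      (M.ncard : ℝ≥0∞) * ((m : ℝ≥0∞) ^ (K * s))⁻¹ ≤
        liminf (fun n => ν {ω | X n ω ∈ ⋃ b ∈ M, ⋃ c ∈ {c | neighb m K b c}, Jcube m K c}) atTop)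
    (F : Finset (Fin s → ℕ)) (hF : F ⊆ cubeIndices m k s) :
    (F.card : ℝ≥0∞) * ((m : ℝ≥0∞) ^ (k * s))⁻¹ ≤
      liminf (fun n => ν {ω | X n ω ∈ ⋃ a ∈ F, Jcube m k a}) atTop := by
  refine le_of_tendsto (tendsto_card_mul_inv_pow hm k s F.card) (Eventually.of_forall fun r => ?_)
  set M := F.biUnion (innerRefinements m r)
  have hMcard : M.card = F.card * (m ^ r - 2) ^ s := by
    rw [Finset.card_biUnion fun a _ a' _ hne => disjoint_innerRefinements hne]
    simp [card_innerRefinements]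
  have hMbound : ∀ b ∈ (M : Set (Fin s → ℕ)), ∀ i, b i < m ^ (k + r) := fun b hb => by
    obtain ⟨a, ha, hab⟩ := Finset.mem_biUnion.mp hb
    exact mem_cubeIndices.mp (innerRefinements_subset_cubeIndices (hF ha) hab)
  have hsub : ⋃ b ∈ (M : Set (Fin s → ℕ)), ⋃ c ∈ {c | neighb m (k + r) b c}, Jcube m (k + r) c ⊆
      ⋃ a ∈ F, Jcube m k a := by
    refine iUnion₂_subset fun b hb => iUnion₂_subset fun c hc => ?_
    obtain ⟨a, ha, hab⟩ := Finset.mem_biUnion.mp hb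
    exact (Jcube_subset_of_neighb (by omega) (mem_cubeIndices.mp (hF ha)) hab hc).trans
      (subset_biUnion_of_mem (u := fun a => Jcube m k a) ha)
  calc ((F.card * (m ^ r - 2) ^ s : ℕ) : ℝ≥0∞) * ((m : ℝ≥0∞) ^ ((k + r) * s))⁻¹
      = ((M : Set (Fin s → ℕ)).ncard : ℝ≥0∞) * ((m : ℝ≥0∞) ^ ((k + r) * s))⁻¹ := by
        rw [ncard_coe_finset, hMcard]
    _ ≤ _ := hneighb (k + r) M hMbound
    _ ≤ _ := liminf_le_liminf (Eventually.of_forall fun n => measure_mono fun ω hω => hsub hω)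

lemma tendsto_measure_Jcube [IsProbabilityMeasure ν] (hm : 0 < m)
    (hXmeas : ∀ n, Measurable (X n)) (hX : ∀ n ω i, X n ω i ∈ Ico 0 1)
    (hlower : ∀ F ⊆ cubeIndices m k s, (F.card : ℝ≥0∞) * ((m : ℝ≥0∞) ^ (k * s))⁻¹ ≤
      liminf (fun n => ν {ω | X n ω ∈ ⋃ a ∈ F, Jcube m k a}) atTop)
    {a₀ : Fin s → ℕ} (ha₀ : a₀ ∈ cubeIndices m k s) :
    Tendsto (fun n => ν {ω | X n ω ∈ Jcube m k a₀}) atTop (𝓝 ((m : ℝ≥0∞) ^ (k * s))⁻¹) := by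
  set L := ((m : ℝ≥0∞) ^ (k * s))⁻¹
  have hmks : (m : ℝ≥0∞) ^ (k * s) ≠ 0 := pow_ne_zero _ (by exact_mod_cast hm.ne')
  set R := fun n => {ω | X n ω ∈ ⋃ a ∈ (cubeIndices m k s).erase a₀, Jcube m k a}
  have hR : ∀ n, {ω | X n ω ∈ Jcube m k a₀} = (R n)ᶜ := fun n => by
    ext ω
    exact (not_iff_comm.mp (not_mem_Jcube_iff hm (hX n ω))).symm
  have hRmeas : ∀ n, MeasurableSet (R n) := fun n =>
    hXmeas n (Finset.measurableSet_biUnion _ fun a _ => measurableSet_Jcube m k a)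
  have hlowerJ : L ≤ liminf (fun n => ν {ω | X n ω ∈ Jcube m k a₀}) atTop := by
    simpa using hlower {a₀} (Finset.singleton_subset_iff.mpr ha₀)
  have hlowerR : 1 - L ≤ liminf (fun n => ν (R n)) atTop := by
    convert hlower _ (Finset.erase_subset a₀ _) using 1
    rw [Finset.card_erase_of_mem ha₀, card_cubeIndices, ENNReal.natCast_sub, Nat.cast_pow,
      Nat.cast_one, ENNReal.sub_mul (fun _ _ => ENNReal.inv_ne_top.mpr hmks),
      ENNReal.mul_inv_cancel hmks (ENNReal.pow_ne_top (ENNReal.natCast_ne_top m)), one_mul]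
  have hupperJ : limsup (fun n => ν {ω | X n ω ∈ Jcube m k a₀}) atTop ≤ L := by
    simp_rw [hR, prob_compl_eq_one_sub (hRmeas _)]
    rw [ENNReal.limsup_const_sub _ _ ENNReal.one_ne_top]
    calc 1 - liminf (fun n => ν (R n)) atTop ≤ 1 - (1 - L) := tsub_le_tsub_left hlowerR 1
      _ = L := ENNReal.sub_sub_cancel ENNReal.one_ne_top
        (ENNReal.inv_le_one.mpr (one_le_pow₀ (by exact_mod_cast hm)))
  exact tendsto_of_le_liminf_of_limsup_le hlowerJ hupperJ

end CubeProbabilities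

theorem stmt14_general (m s : ℕ) (hm : 1 < m)
    (μ : Measure (Zm m)) (hμ : IsHaar μ)
    (f : Fin s → Zm m → Zm m) (hf : ∀ i, Lip1 (f i))
    (h : ∀ (K d : ℕ) (β : ℕ), β < m ^ d →
      ∀ M : Set (Fin s → ℕ), (∀ b ∈ M, ∀ i, b i < m ^ K) →
        (M.ncard : ENNReal) * ((m : ENNReal) ^ (K * s))⁻¹ ≤
          Filter.liminf
            (fun n => ProbabilityTheory.cond μ (suffixEvent m d β)
              {ω | phi f n ω ∈ ⋃ b ∈ M, ⋃ c ∈ {c | neighb m K b c}, Jcube m K c})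
            atTop) :
    UniformWithSuffix μ f := by
  intro k d a₀ ha₀ β hβ
  have hE : μ (suffixEvent m d β) = ((m : ℝ≥0∞) ^ d)⁻¹ := hμ d β hβ
  have : IsProbabilityMeasure μ[|suffixEvent m d β] := cond_isProbabilityMeasure_of_finite
    (by simp [hE]) (by simp [hE]; omega)
  exact tendsto_measure_Jcube _ _ (by omega) (measurable_phi hf) (phi_mem_Ico (by omega) f)
    (fun F hF => le_liminf_measure_biUnion_Jcube _ _ hm (h · d β hβ) F hF)
    (mem_cubeIndices.mpr ha₀)

/-- Sufficiency of neighborhood hitting: if for all `K, d, β` and every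
`M ⊆ {0,…,m^K−1}^s` the conditional probability that `φₙ` hits
`⋃_{b∈M} ⋃_{c∈O_K(b)} J_K(c)` has liminf at least `Σ_{b∈M} m^{-Ks}`, then the
collection `f₁,…,f_s` is uniform with each suffix. -/
theorem stmt14 (m s : ℕ) (hm : 1 < m) (hs : 1 ≤ s)
    (μ : Measure (Zm m)) [IsProbabilityMeasure μ] (hμ : IsHaar μ)
    (f : Fin s → Zm m → Zm m) (hf : ∀ i, Lip1 (f i))
    (h : ∀ (K d : ℕ) (β : ℕ), β < m ^ d →
      ∀ M : Set (Fin s → ℕ), (∀ b ∈ M, ∀ i, b i < m ^ K) →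
        (M.ncard : ENNReal) * ((m : ENNReal) ^ (K * s))⁻¹ ≤
          Filter.liminf
            (fun n => ProbabilityTheory.cond μ (suffixEvent m d β)
              {ω | phi f n ω ∈ ⋃ b ∈ M, ⋃ c ∈ {c | neighb m K b c}, Jcube m K c})
            atTop) :
    UniformWithSuffix μ f :=
  stmt14_general m s hm μ hμ f hf h
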